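/- Let G be a finite group with |G| = n, V a finite type, β : V → V → G → ℂ, and let L : Matrix (V × G) (V × G) ℂ be the lift matrix, L (u,g) (v,g') = β u v (g⁻¹ * g'). Let B̂ : Matrix V V ℂ denote the trivial-representation image of the base matrix, B̂ u v = Σ_{s ∈ G} β u v s, and let S := J − 2·L − 1 be the Seidel matrix of the lift (J the all-ones matrix on V × G). Then every root μ of the characteristic polynomial of S satisfies: either μ is a root of the characteristic polynomial of (n:ℂ)·J_V − 2·B̂ − 1 (J_V the all-ones matrix on V), or there exists a root λ of the characteristic polynomial of L with μ = −2·λ − 1. -/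

import Mathlib

/-!
Summing a vector on `V × G` over the fibers `{u} × G` turns the Seidel matrix `J − 2L − I` of
the lift into `nJ_V − 2B̂ − I`, because every column of the lift matrix sums, over each fiber,
to the corresponding entry of `B̂`. So an eigenvector of the Seidel matrix either has nonzero
fiber sums, which then form an eigenvector of `nJ_V − 2B̂ − I` for the same eigenvalue, or it has
zero fiber sums, hence is killed by `J`, and is an eigenvector of `L`.
-/

open Matrix

theorem Matrix.isRoot_charpoly_iff_exists_mulVec_eq_smul {R n : Type*} [CommRing R] [IsDomain R]
    [Fintype n] [DecidableEq n] (A : Matrix n n R) (μ : R) :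
    A.charpoly.IsRoot μ ↔ ∃ v ≠ 0, A *ᵥ v = μ • v := by
  rw [← charpoly_toLin', ← Module.End.hasEigenvalue_iff_isRoot_charpoly,
    Module.End.hasEigenvalue_iff]
  simp [Submodule.ne_bot_iff, and_comm]

section Seidel

variable {n R : Type*} [Fintype n] [DecidableEq n]

def seidelMatrix [Ring R] (A : Matrix n n R) : Matrix n n R := of 1 - 2 • A - 1

theorem mulVec_eq_smul_of_seidelMatrix_mulVec_eq_smul [Field R] [NeZero (2 : R)]
    {A : Matrix n n R} {v : n → R} {μ : R} (hv : ∑ i, v i = 0)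
    (h : seidelMatrix A *ᵥ v = μ • v) : A *ᵥ v = ((-1 - μ) / 2) • v := by
  have hJ : (of 1 : Matrix n n R) *ᵥ v = 0 := by
    ext; simp [mulVec, dotProduct, hv]
  rw [seidelMatrix, sub_mulVec, sub_mulVec, hJ, one_mulVec, smul_mulVec] at h
  ext i
  have hi := congrFun h i
  simp only [nsmul_eq_mul, Nat.cast_ofNat, zero_sub, Pi.sub_apply, Pi.neg_apply, Pi.mul_apply,
    Pi.ofNat_apply, Pi.smul_apply, smul_eq_mul] at hi ⊢
  field_simp
  linear_combination -hi

end Seidel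

section Fibers

variable {V G R : Type*} [Fintype G]

def fiberSum [AddCommMonoid R] (v : V × G → R) : V → R := fun u => ∑ g, v (u, g)

theorem sum_fiberSum [Fintype V] [AddCommMonoid R] (v : V × G → R) :
    ∑ u, fiberSum v u = ∑ q, v q :=
  (Fintype.sum_prod_type v).symm

theorem fiberSum_smul [Semiring R] (c : R) (v : V × G → R) :
    fiberSum (c • v) = c • fiberSum v := by
  ext u
  simp [fiberSum, Finset.mul_sum]

theorem fiberSum_mulVec_of_sum_fiber_eq [Fintype V] [NonUnitalNonAssocSemiring R]
    (A : Matrix (V × G) (V × G) R) (Q : Matrix V V R)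
    (hA : ∀ u w k, ∑ h, A (u, h) (w, k) = Q u w) (v : V × G → R) :
    fiberSum (A *ᵥ v) = Q *ᵥ fiberSum v := by
  ext u
  calc fiberSum (A *ᵥ v) u = ∑ h, ∑ w, ∑ k, A (u, h) (w, k) * v (w, k) := by
        simp only [fiberSum, mulVec, dotProduct, Fintype.sum_prod_type]
    _ = ∑ w, ∑ k, (∑ h, A (u, h) (w, k)) * v (w, k) := by
        simp only [Finset.sum_mul]
        rw [Finset.sum_comm]
        exact Finset.sum_congr rfl fun w _ => Finset.sum_comm
    _ = ∑ w, Q u w * ∑ k, v (w, k) := by simp only [hA, Finset.mul_sum]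

theorem sum_fiber_one [DecidableEq V] [DecidableEq G] [AddCommMonoidWithOne R] (u w : V) (k : G) :
    ∑ h, (1 : Matrix (V × G) (V × G) R) (u, h) (w, k) = (1 : Matrix V V R) u w := by
  by_cases huw : u = w <;> simp [one_apply, huw]

end Fibers

section Lift

variable {V G R : Type*} [Group G] [Fintype G]

/-- For a voltage graph, `β u v s` counts the arcs `u → v` of voltage `s`; then `liftMatrix β`
is the adjacency matrix of the lift and `voltageSumMatrix β` that of the base graph. -/
def liftMatrix (β : V → V → G → R) : Matrix (V × G) (V × G) R :=
  of fun p q => β p.1 q.1 (p.2⁻¹ * q.2)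

def voltageSumMatrix [AddCommMonoid R] (β : V → V → G → R) : Matrix V V R :=
  of fun u w => ∑ s, β u w s

theorem sum_fiber_liftMatrix [AddCommMonoid R] (β : V → V → G → R) (u w : V) (k : G) :
    ∑ h, liftMatrix β (u, h) (w, k) = voltageSumMatrix β u w :=
  Fintype.sum_equiv ((Equiv.inv G).trans (Equiv.mulRight k)) _ _ fun _ => rfl

theorem sum_fiber_seidelMatrix_liftMatrix [DecidableEq V] [DecidableEq G] [Ring R]
    (β : V → V → G → R) (u w : V) (k : G) :
    ∑ h, seidelMatrix (liftMatrix β) (u, h) (w, k) =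
      ((Fintype.card G : R) • of 1 - 2 • voltageSumMatrix β - 1 : Matrix V V R) u w := by
  simp only [seidelMatrix, Matrix.sub_apply, Matrix.smul_apply, of_apply, Pi.one_apply, Finset.sum_sub_distrib,
    ← Finset.mul_sum, sum_fiber_liftMatrix, sum_fiber_one, Finset.sum_const, Finset.card_univ,
    nsmul_eq_mul, smul_eq_mul, mul_one]

end Lift

theorem seidel_spectrum_of_lift_general (G : Type) [Group G] [Fintype G] [DecidableEq G]
    (n : ℕ) (hn : Fintype.card G = n)
    (V : Type) [Fintype V] [DecidableEq V]
    (β : V → V → G → ℂ)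
    (L : Matrix (V × G) (V × G) ℂ)
    (hL : ∀ (u v : V) (g g' : G), L (u, g) (v, g') = β u v (g⁻¹ * g'))
    (Bhat : Matrix V V ℂ) (hBhat : ∀ u v : V, Bhat u v = ∑ s : G, β u v s)
    (J : Matrix (V × G) (V × G) ℂ) (hJ : ∀ p q : V × G, J p q = 1)
    (S : Matrix (V × G) (V × G) ℂ)
    (hS : S = J - 2 • L - (1 : Matrix (V × G) (V × G) ℂ))
    (JV : Matrix V V ℂ) (hJV : ∀ u v : V, JV u v = 1)
    (μ : ℂ) (hμ : S.charpoly.IsRoot μ) :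
    ((n : ℂ) • JV - 2 • Bhat - (1 : Matrix V V ℂ)).charpoly.IsRoot μ ∨
      ∃ lam : ℂ, L.charpoly.IsRoot lam ∧ μ = -2 * lam - 1 := by
  obtain rfl : L = liftMatrix β := ext fun p q => hL p.1 q.1 p.2 q.2
  obtain rfl : Bhat = voltageSumMatrix β := ext hBhat
  obtain rfl : J = of 1 := ext hJ
  obtain rfl : JV = of 1 := ext hJV
  obtain rfl : S = seidelMatrix (liftMatrix β) := hS
  subst hn
  obtain ⟨v, hv0, hSv⟩ := (isRoot_charpoly_iff_exists_mulVec_eq_smul _ μ).1 hμ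
  by_cases hy : fiberSum v = 0
  · have hv : ∑ q, v q = 0 := by simp [← sum_fiberSum, hy]
    exact .inr ⟨(-1 - μ) / 2, (isRoot_charpoly_iff_exists_mulVec_eq_smul _ _).2
      ⟨v, hv0, mulVec_eq_smul_of_seidelMatrix_mulVec_eq_smul hv hSv⟩, by ring⟩
  · refine .inl ((isRoot_charpoly_iff_exists_mulVec_eq_smul _ μ).2 ⟨fiberSum v, hy, ?_⟩)
    rw [← fiberSum_mulVec_of_sum_fiber_eq _ _ (sum_fiber_seidelMatrix_liftMatrix β) v, hSv,
      fiberSum_smul]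

/-- The paper's final Lemma: apart from the eigenvalues of `n·J_V − 2·B̂ − I`, the Seidel
eigenvalues of the lift are of the form `−2λ − 1`, where `λ` is an adjacency eigenvalue of
the lift. -/
theorem seidel_spectrum_of_lift (G : Type) [Group G] [Fintype G] [DecidableEq G]
    (n : ℕ) (hn : Fintype.card G = n)
    (V : Type) [Fintype V] [Nonempty V] [DecidableEq V]
    (β : V → V → G → ℂ)
    (L : Matrix (V × G) (V × G) ℂ)
    (hL : ∀ (u v : V) (g g' : G), L (u, g) (v, g') = β u v (g⁻¹ * g'))
    (Bhat : Matrix V V ℂ) (hBhat : ∀ u v : V, Bhat u v = ∑ s : G, β u v s)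
    (J : Matrix (V × G) (V × G) ℂ) (hJ : ∀ p q : V × G, J p q = 1)
    (S : Matrix (V × G) (V × G) ℂ)
    (hS : S = J - 2 • L - (1 : Matrix (V × G) (V × G) ℂ))
    (JV : Matrix V V ℂ) (hJV : ∀ u v : V, JV u v = 1)
    (μ : ℂ) (hμ : S.charpoly.IsRoot μ) :
    ((n : ℂ) • JV - 2 • Bhat - (1 : Matrix V V ℂ)).charpoly.IsRoot μ ∨
      ∃ lam : ℂ, L.charpoly.IsRoot lam ∧ μ = -2 * lam - 1 :=
  seidel_spectrum_of_lift_general G n hn V β L hL Bhat hBhat J hJ S hS JV hJV μ hμ
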